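/- arXiv:2512.14662 — 5 statements merged into one kernel-verified Lean document; each statement's English description precedes it below -/
import Mathlib

section
/- There is no strict arbitrage if and only if there exists a nonnegative function g : [0,∞) → ℝ with g ≥ 0, g(0) = 1, and P_i = Σ_{j=1}^N C_{ij} g(x_j) for all i = 1,…,M. -/
open Matrix BigOperators

/-- Farkas' lemma, proved by induction on the number of generators. -/
lemma farkas_aux (M : ℕ) : ∀ (n : ℕ) (A : Fin n → (Fin M → ℝ)) (b : Fin M → ℝ),
    (∀ q : Fin M → ℝ, (∀ j, 0 ≤ q ⬝ᵥ A j) → 0 ≤ q ⬝ᵥ b) →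
    ∃ y : Fin n → ℝ, (∀ j, 0 ≤ y j) ∧ b = ∑ j, y j • A j := by
  intro n
  induction n with
  | zero =>
    intro A b hyp
    refine ⟨fun j => 0, fun j => le_rfl, ?_⟩
    have h := hyp (-b) (fun j => j.elim0)
    have hbb : b ⬝ᵥ b ≤ 0 := by
      have : (-b) ⬝ᵥ b = -(b ⬝ᵥ b) := by simp [neg_dotProduct]
      linarith [h, this ▸ h]
    have hb0 : b = 0 := by
      have := dotProduct_self_eq_zero (v := b)
      have hnn : 0 ≤ b ⬝ᵥ b :=
        Finset.sum_nonneg fun i _ => mul_self_nonneg (b i)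
      have hz : b ⬝ᵥ b = 0 := le_antisymm hbb hnn
      exact this.mp hz
    simp [hb0]
  | succ n ih =>
    intro A b hyp
    by_cases hres : ∀ q : Fin M → ℝ, (∀ j : Fin n, 0 ≤ q ⬝ᵥ A j.castSucc) → 0 ≤ q ⬝ᵥ b
    · obtain ⟨y, hy, hb⟩ := ih (fun j => A j.castSucc) b hres
      refine ⟨Fin.snoc y 0, ?_, ?_⟩
      · intro j
        refine Fin.lastCases ?_ ?_ j
        · simp
        · intro k; simpa using hy k
      · rw [Fin.sum_univ_castSucc]
        simp [Fin.snoc_castSucc, hb]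
    · push_neg at hres
      obtain ⟨q0, hq0A, hq0b⟩ := hres
      -- the last generator must have negative inner product with q0
      have hc : q0 ⬝ᵥ A (Fin.last n) < 0 := by
        by_contra hcge
        push_neg at hcge
        have : ∀ j : Fin (n+1), 0 ≤ q0 ⬝ᵥ A j := by
          intro j
          refine Fin.lastCases ?_ ?_ j
          · exact hcge
          · exact hq0A
        exact absurd (hyp q0 this) (not_le.mpr hq0b)
      set c := q0 ⬝ᵥ A (Fin.last n) with hcdef
      set μ := (q0 ⬝ᵥ b) / c with hμdef
      have hμpos : 0 < μ := div_pos_of_neg_of_neg hq0b hc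
      set lam : Fin n → ℝ := fun j => (q0 ⬝ᵥ A j.castSucc) / c with hlamdef
      have hlamnp : ∀ j, lam j ≤ 0 := fun j =>
        div_nonpos_of_nonneg_of_nonpos (hq0A j) (le_of_lt hc)
      set A' : Fin n → (Fin M → ℝ) := fun j => A j.castSucc - lam j • A (Fin.last n) with hA'def
      set b' : Fin M → ℝ := b - μ • A (Fin.last n) with hb'def
      have hres' : ∀ q : Fin M → ℝ, (∀ j, 0 ≤ q ⬝ᵥ A' j) → 0 ≤ q ⬝ᵥ b' := by
        intro q hq
        set t := (q ⬝ᵥ A (Fin.last n)) / c with htdef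
        set q' := q - t • q0 with hq'def
        have key : ∀ v : Fin M → ℝ, q' ⬝ᵥ v = q ⬝ᵥ v - t * (q0 ⬝ᵥ v) := by
          intro v
          simp [hq'def, sub_dotProduct, smul_dotProduct, smul_eq_mul]
        have hq'A : ∀ j : Fin (n+1), 0 ≤ q' ⬝ᵥ A j := by
          intro j
          refine Fin.lastCases ?_ ?_ j
          · rw [key, htdef, div_mul_cancel₀ _ (ne_of_lt hc), sub_self]
          · intro k
            have := hq k
            rw [hA'def] at this
            simp only [dotProduct_sub, dotProduct_smul, smul_eq_mul] at this
            rw [key]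
            have hlk : lam k = (q0 ⬝ᵥ A k.castSucc) / c := rfl
            have : 0 ≤ q ⬝ᵥ A k.castSucc - lam k * (q ⬝ᵥ A (Fin.last n)) := this
            calc (0:ℝ) ≤ q ⬝ᵥ A k.castSucc - lam k * (q ⬝ᵥ A (Fin.last n)) := this
              _ = q ⬝ᵥ A k.castSucc - t * (q0 ⬝ᵥ A k.castSucc) := by
                  rw [hlk, htdef]; field_simp <;> ring
        have h0 := hyp q' hq'A
        rw [key] at h0
        have : q ⬝ᵥ b' = q ⬝ᵥ b - t * (q0 ⬝ᵥ b) := by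
          rw [hb'def]
          simp only [dotProduct_sub, dotProduct_smul, smul_eq_mul]
          rw [hμdef, htdef]; field_simp <;> ring
        linarith [h0, this.ge, this.le]
      obtain ⟨y, hy, hbeq⟩ := ih A' b' hres'
      refine ⟨Fin.snoc y (μ - ∑ j, y j * lam j), ?_, ?_⟩
      · intro j
        refine Fin.lastCases ?_ ?_ j
        · simp only [Fin.snoc_last]
          have : ∑ j, y j * lam j ≤ 0 :=
            Finset.sum_nonpos fun j _ => mul_nonpos_of_nonneg_of_nonpos (hy j) (hlamnp j)
          linarith
        · intro k; simpa using hy k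
      · have hb : b = b' + μ • A (Fin.last n) := by rw [hb'def]; abel
        rw [hb, hbeq, Fin.sum_univ_castSucc]
        simp only [Fin.snoc_castSucc, Fin.snoc_last, hA'def]
        rw [Finset.sum_congr rfl (fun j _ => smul_sub (y j) (A j.castSucc) (lam j • A (Fin.last n)))]
        rw [Finset.sum_sub_distrib]
        have : ∑ j, y j • lam j • A (Fin.last n) = (∑ j, y j * lam j) • A (Fin.last n) := by
          rw [Finset.sum_smul]
          exact Finset.sum_congr rfl fun j _ => by rw [smul_smul]
        rw [this, sub_smul]
        abel

/-- There is no strict arbitrage iff there exists a nonnegative discount curve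
`g : [0,∞) → ℝ` with `g ≥ 0`, `g 0 = 1`, and `P = C g(x)`. -/
theorem stmt_2 (M N : ℕ) (hM : 1 ≤ M) (hN : 1 ≤ N)
    (P : Fin M → ℝ) (C : Matrix (Fin M) (Fin N) ℝ)
    (x : Fin N → ℝ) (hx : ∀ j, 0 < x j) (hmono : StrictMono x) :
    (¬ ∃ q : Fin M → ℝ, q ⬝ᵥ P < 0 ∧ ∀ j, 0 ≤ Matrix.vecMul q C j) ↔
    (∃ g : ℝ → ℝ, (∀ t : ℝ, 0 ≤ t → 0 ≤ g t) ∧ g 0 = 1 ∧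
      ∀ i, P i = ∑ j, C i j * g (x j)) := by
  constructor
  · intro hno
    have hyp : ∀ q : Fin M → ℝ, (∀ j, 0 ≤ q ⬝ᵥ (fun i => C i j)) → 0 ≤ q ⬝ᵥ P := by
      intro q hq
      by_contra hlt
      push_neg at hlt
      exact hno ⟨q, hlt, fun j => by
        have := hq j
        simpa [Matrix.vecMul, dotProduct] using this⟩
    obtain ⟨y, hy, hP⟩ := farkas_aux M N (fun j i => C i j) P hyp
    classical
    refine ⟨fun t => if t = 0 then 1 else ∑ j, if x j = t then y j else 0, ?_, ?_, ?_⟩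
    · intro t ht
      by_cases h0 : t = 0
      · simp [h0]
      · simp only [h0, if_false]
        exact Finset.sum_nonneg fun j _ => by
          by_cases h : x j = t <;> simp [h, hy j]
    · simp
    · intro i
      have hPi : P i = ∑ j, y j * C i j := by
        have := congrFun hP i
        simpa [Finset.sum_apply] using this
      rw [hPi]
      refine Finset.sum_congr rfl fun j _ => ?_
      have hxj0 : x j ≠ 0 := ne_of_gt (hx j)
      simp only [hxj0, if_false]
      have : (∑ k, if x k = x j then y k else 0) = y j := by
        rw [Finset.sum_eq_single j]
        · simp
        · intro k _ hk
          have : x k ≠ x j := fun h => hk (hmono.injective h)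
          simp [this]
        · intro h; exact absurd (Finset.mem_univ j) h
      rw [this]; ring
  · rintro ⟨g, hg, hg0, hPg⟩ ⟨q, hqP, hqC⟩
    have : q ⬝ᵥ P = ∑ j, (Matrix.vecMul q C j) * g (x j) := by
      simp only [dotProduct, Matrix.vecMul, Finset.sum_mul]
      rw [Finset.sum_comm]
      refine Finset.sum_congr rfl fun i _ => ?_
      rw [hPg i, Finset.mul_sum]
      refine Finset.sum_congr rfl fun j _ => ?_
      ring
    have hnn : 0 ≤ q ⬝ᵥ P := by
      rw [this]
      exact Finset.sum_nonneg fun j _ =>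
        mul_nonneg (hqC j) (hg (x j) (le_of_lt (hx j)))
    exact absurd hqP (not_lt.mpr hnn)
end

section
/- There is no strict arbitrage if and only if there exists a vector v ∈ ℝ^N with v ≥ 0 componentwise such that P = C v. -/
/-!
By a conic Carathéodory argument, every nonnegative combination of finitely many vectors can be
rewritten as a nonnegative combination of a linearly independent subfamily. The cone they generate
is therefore a finite union of images of the closed orthant under injective linear maps, hence
closed, and Hahn–Banach separates any point outside it by a functional that is nonnegative on the
generators. For the columns of `C` and the point `P` such a functional is a strict arbitrage.
Conversely, if `P = C v` with `v ≥ 0`, then `q ⬝ᵥ P = (q ᵥ* C) ⬝ᵥ v ≥ 0` for every `q` with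
`q ᵥ* C ≥ 0`.
-/

open Matrix Function Set

section Caratheodory

variable {𝕜 E ι : Type*} [Field 𝕜] [LinearOrder 𝕜] [IsStrictOrderedRing 𝕜]
  [AddCommGroup E] [Module 𝕜 E] [Fintype ι]

lemma exists_sub_smul_nonneg_eq_zero {v c : ι → 𝕜} (hv : 0 ≤ v) (hc : ∃ j, 0 < c j) :
    ∃ t : 𝕜, 0 ≤ v - t • c ∧ ∃ j, 0 < c j ∧ v j = t * c j := by
  classical
  have hpos : ({j | 0 < c j} : Finset ι).Nonempty := by
    obtain ⟨j, hj⟩ := hc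
    exact ⟨j, by simpa using hj⟩
  obtain ⟨j₀, hj₀, hmin⟩ := Finset.exists_min_image _ (fun j => v j / c j) hpos
  simp only [Finset.mem_filter, Finset.mem_univ, true_and] at hj₀ hmin
  refine ⟨v j₀ / c j₀, fun j => ?_, j₀, hj₀, (div_mul_cancel₀ _ hj₀.ne').symm⟩
  simp only [Pi.zero_apply, Pi.sub_apply, Pi.smul_apply, smul_eq_mul, sub_nonneg]
  rcases lt_or_ge 0 (c j) with hcj | hcj
  · exact (le_div_iff₀ hcj).1 (hmin j hcj)
  · exact (mul_nonpos_of_nonneg_of_nonpos (div_nonneg (hv j₀) hj₀.le) hcj).trans (hv j)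

lemma exists_pos_of_not_linearIndepOn {w : ι → E} {s : Set ι} (hw : ¬LinearIndepOn 𝕜 w s) :
    ∃ c : ι → 𝕜, support c ⊆ s ∧ ∑ i, c i • w i = 0 ∧ ∃ j, 0 < c j := by
  obtain ⟨f, hf_supp, hf_sum, hf_ne⟩ := linearDepOn_iff'.1 hw
  rw [Finsupp.mem_supported, ← Finsupp.fun_support_eq] at hf_supp
  rw [Finsupp.linearCombination_apply, Finsupp.sum_fintype _ _ fun i => zero_smul 𝕜 (w i)]
    at hf_sum
  obtain ⟨j, hj⟩ := DFunLike.ne_iff.1 hf_ne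
  rcases hj.lt_or_gt with hneg | hpos
  · exact ⟨-f, by rwa [support_neg], by simp [hf_sum], j, by simpa using hneg⟩
  · exact ⟨f, hf_supp, hf_sum, j, hpos⟩

lemma exists_nonneg_support_ssubset_of_not_linearIndepOn {w : ι → E} {v : ι → 𝕜} (hv : 0 ≤ v)
    (hw : ¬LinearIndepOn 𝕜 w (support v)) :
    ∃ v' : ι → 𝕜, 0 ≤ v' ∧ ∑ i, v' i • w i = ∑ i, v i • w i ∧ support v' ⊂ support v := by
  obtain ⟨c, hc_supp, hc_sum, hc_pos⟩ := exists_pos_of_not_linearIndepOn hw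
  obtain ⟨t, ht, j, hcj, hvj⟩ := exists_sub_smul_nonneg_eq_zero hv hc_pos
  refine ⟨v - t • c, ht, ?_, ?_⟩
  · simp [sub_smul, Finset.sum_sub_distrib, mul_smul, ← Finset.smul_sum, hc_sum]
  · have hsub : support (v - t • c) ⊆ support v :=
      (support_sub _ _).trans (union_subset le_rfl ((support_smul_subset_right _ _).trans hc_supp))
    refine (ssubset_iff_of_subset hsub).2 ⟨j, hc_supp hcj.ne', ?_⟩
    simp [hvj]

theorem exists_nonneg_linearIndepOn_support (w : ι → E) {v : ι → 𝕜} (hv : 0 ≤ v) :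
    ∃ v' : ι → 𝕜, 0 ≤ v' ∧ ∑ i, v' i • w i = ∑ i, v i • w i ∧
      LinearIndepOn 𝕜 w (support v') := by
  induction hs : support v using WellFoundedLT.induction generalizing v with
  | ind s ih =>
    by_cases hw : LinearIndepOn 𝕜 w (support v)
    · exact ⟨v, hv, rfl, hw⟩
    obtain ⟨v', hv', hsum, hlt⟩ := exists_nonneg_support_ssubset_of_not_linearIndepOn hv hw
    obtain ⟨v'', hv'', hsum', hli⟩ := ih _ (hs ▸ hlt) hv' rfl
    exact ⟨v'', hv'', hsum'.trans hsum, hli⟩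

end Caratheodory

namespace PointedCone

lemma mem_hull_range_iff {R E ι : Type*} [Semiring R] [PartialOrder R] [IsOrderedRing R]
    [AddCommMonoid E] [Module R E] [Fintype ι] {w : ι → E} {x : E} :
    x ∈ hull R (range w) ↔ ∃ c : ι → R, 0 ≤ c ∧ ∑ i, c i • w i = x := by
  rw [Submodule.mem_span_range_iff_exists_fun]
  constructor
  · rintro ⟨c, rfl⟩
    exact ⟨fun i => c i, fun i => (c i).2, rfl⟩
  · rintro ⟨c, hc, rfl⟩
    exact ⟨fun i => ⟨c i, hc i⟩, rfl⟩

section Topology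

variable {E ι : Type*} [AddCommGroup E] [Module ℝ E] [TopologicalSpace E]
  [IsTopologicalAddGroup E] [ContinuousSMul ℝ E] [T2Space E] [Fintype ι]

lemma isClosed_hull_range_of_linearIndependent {w : ι → E} (hw : LinearIndependent ℝ w) :
    IsClosed (hull ℝ (range w) : Set E) := by
  have hL := LinearMap.isClosedEmbedding_of_injective
    (LinearMap.ker_eq_bot.2 hw.fintypeLinearCombination_injective)
  convert hL.isClosedMap _ (isClosed_Ici (a := (0 : ι → ℝ)))
  ext x
  simp [mem_hull_range_iff, Fintype.linearCombination_apply]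

theorem isClosed_hull_range (w : ι → E) : IsClosed (hull ℝ (range w) : Set E) := by
  classical
  have hunion : (hull ℝ (range w) : Set E) =
      ⋃ (s : Set ι) (_ : LinearIndepOn ℝ w s), (hull ℝ (range fun i : s => w i) : Set E) := by
    refine Subset.antisymm (fun x hx => ?_) (iUnion₂_subset fun s _ =>
      Submodule.span_mono (range_comp_subset_range Subtype.val w))
    obtain ⟨v, hv, rfl⟩ := mem_hull_range_iff.1 hx
    obtain ⟨v', hv', hsum, hli⟩ := exists_nonneg_linearIndepOn_support w hv
    refine mem_iUnion₂.2 ⟨support v', hli, mem_hull_range_iff.2 ⟨fun i => v' i, fun i => hv' i, ?_⟩⟩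
    rw [← hsum]
    exact (Finset.sum_congr_set _ _ _ (fun _ _ => rfl)
      fun i hi => by simp [notMem_support.1 hi]).symm
  rw [hunion]
  exact isClosed_iUnion_of_finite fun s => isClosed_iUnion_of_finite
    isClosed_hull_range_of_linearIndependent

theorem exists_strongDual_of_notMem_hull_range [LocallyConvexSpace ℝ E] {w : ι → E} {x : E}
    (hx : x ∉ hull ℝ (range w)) : ∃ f : StrongDual ℝ E, (∀ i, 0 ≤ f (w i)) ∧ f x < 0 := by
  obtain ⟨f, hf, hfx⟩ :=
    ProperCone.hyperplane_separation_point ⟨hull ℝ (range w), isClosed_hull_range w⟩ hx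
  exact ⟨f, fun i => hf _ (subset_hull (mem_range_self i)), hfx⟩

end Topology

end PointedCone

lemma Matrix.mulVec_eq_sum_smul_transpose {R m n : Type*} [CommSemiring R] [Fintype n]
    (C : Matrix m n R) (v : n → R) : C *ᵥ v = ∑ j, v j • Cᵀ j := by
  ext i
  simp [mulVec, dotProduct, mul_comm]

lemma Matrix.dotProduct_apply_single_eq {n : Type*} [Fintype n] [DecidableEq n]
    (f : StrongDual ℝ (n → ℝ)) (x : n → ℝ) : (fun i => f (Pi.single i 1)) ⬝ᵥ x = f x := by
  have hf := LinearMap.pi_apply_eq_sum_univ (f : (n → ℝ) →ₗ[ℝ] ℝ) x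
  simp only [ContinuousLinearMap.coe_coe, smul_eq_mul] at hf
  rw [hf, dotProduct]
  refine Finset.sum_congr rfl fun i _ => ?_
  rw [mul_comm]
  congr
  ext j
  simp [Pi.single_apply, eq_comm]

theorem stmt_7_general (M N : ℕ)
    (P : Fin M → ℝ) (C : Matrix (Fin M) (Fin N) ℝ) :
    (¬ ∃ q : Fin M → ℝ, q ⬝ᵥ P < 0 ∧ ∀ j, 0 ≤ Matrix.vecMul q C j) ↔
    (∃ v : Fin N → ℝ, (∀ j, 0 ≤ v j) ∧ P = Matrix.mulVec C v) := by
  constructor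
  · intro hno
    by_contra hP
    have hPnot : P ∉ PointedCone.hull ℝ (range fun j => Cᵀ j) := by
      intro hPC
      obtain ⟨v, hv, hsum⟩ := PointedCone.mem_hull_range_iff.1 hPC
      exact hP ⟨v, hv, by rw [mulVec_eq_sum_smul_transpose, hsum]⟩
    obtain ⟨f, hfC, hfP⟩ := PointedCone.exists_strongDual_of_notMem_hull_range hPnot
    refine hno ⟨fun i => f (Pi.single i 1), ?_, fun j => ?_⟩
    · rwa [dotProduct_apply_single_eq]
    · change 0 ≤ _ ⬝ᵥ Cᵀ j
      rw [dotProduct_apply_single_eq]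
      exact hfC j
  · rintro ⟨v, hv, rfl⟩ ⟨q, hqP, hqC⟩
    rw [dotProduct_mulVec] at hqP
    exact hqP.not_ge (dotProduct_nonneg_of_nonneg hqC hv)

/-- Farkas-type result: there is no strict arbitrage iff there exists a
componentwise nonnegative vector `v` with `P = C v`. -/
theorem stmt_7 (M N : ℕ) (hM : 1 ≤ M) (hN : 1 ≤ N)
    (P : Fin M → ℝ) (C : Matrix (Fin M) (Fin N) ℝ) :
    (¬ ∃ q : Fin M → ℝ, q ⬝ᵥ P < 0 ∧ ∀ j, 0 ≤ Matrix.vecMul q C j) ↔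
    (∃ v : Fin N → ℝ, (∀ j, 0 ≤ v j) ∧ P = Matrix.mulVec C v) :=
  stmt_7_general M N P C
end

section
/- Assume P ≠ 0. Then the set 𝒞̄ := { Cᵀq : q ∈ ℝ^M, qᵀP ≤ 0 } is a closed convex cone in ℝ^N and equals the topological closure of the set 𝒞 := { Cᵀq : q ∈ ℝ^M, qᵀP < 0 }. -/
open Matrix Topology

/-!
The half-space `{q | q ⬝ᵥ P ≤ 0}` is `ker φ + ℝ≥0 • u` for `φ = (· ⬝ᵥ P)` and any `u` with
`φ u = -1`, so its image under `q ↦ vecMul q C` is a subspace plus a ray. In finite dimensions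
such a set is closed: either the ray lies in the subspace, or a functional vanishing on the
subspace and equal to `1` on the ray's direction carves it out of a larger subspace. Every point
`vecMul q C` with `q ⬝ᵥ P ≤ 0` is the limit of `vecMul (q + t • u) C` as `t → 0⁺`, and these have
`(q + t • u) ⬝ᵥ P < 0`.
-/

section

variable {E F : Type*} [AddCommGroup E] [Module ℝ E]
  [AddCommGroup F] [Module ℝ F] [TopologicalSpace F] [IsTopologicalAddGroup F] [ContinuousSMul ℝ F]

theorem Submodule.isClosed_setOf_add_nonneg_smul [T2Space F] [FiniteDimensional ℝ F]
    (W : Submodule ℝ F) (v : F) :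
    IsClosed {x | ∃ w ∈ W, ∃ c : ℝ, 0 ≤ c ∧ w + c • v = x} := by
  by_cases hv : v ∈ W
  · convert W.closed_of_finiteDimensional using 1
    ext x
    constructor
    · rintro ⟨w, hw, c, -, rfl⟩
      exact W.add_mem hw (W.smul_mem c hv)
    · exact fun hx ↦ ⟨x, hx, 0, le_rfl, by simp⟩
  · obtain ⟨ψ, hψW, hψv⟩ := LinearMap.exists_extend_of_notMem (0 : W →ₗ[ℝ] ℝ) hv 1
    have hψ : ∀ w ∈ W, ψ w = 0 := fun w hw ↦ congr($hψW ⟨w, hw⟩)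
    convert (W ⊔ ℝ ∙ v).closed_of_finiteDimensional.inter
      (isClosed_le continuous_const ψ.continuous_of_finiteDimensional) using 1
    ext x
    simp only [Set.mem_ofPred_eq, Set.mem_inter_iff, SetLike.mem_coe, Submodule.mem_sup,
      Submodule.mem_span_singleton]
    constructor
    · rintro ⟨w, hw, c, hc, rfl⟩
      exact ⟨⟨w, hw, c • v, ⟨c, rfl⟩, rfl⟩, by simpa [hψ w hw, hψv] using hc⟩
    · rintro ⟨⟨w, hw, _, ⟨c, rfl⟩, rfl⟩, hx⟩
      exact ⟨w, hw, c, by simpa [hψ w hw, hψv] using hx, rfl⟩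

theorem LinearMap.isClosed_image_setOf_nonpos [T2Space F] [FiniteDimensional ℝ F]
    (f : E →ₗ[ℝ] F) (φ : E →ₗ[ℝ] ℝ) : IsClosed (f '' {x | φ x ≤ 0}) := by
  by_cases hφ : φ = 0
  · simpa [hφ, ← LinearMap.coe_range] using (LinearMap.range f).closed_of_finiteDimensional
  obtain ⟨u, hu⟩ := LinearMap.surjective_of_ne_zero hφ (-1)
  -- `{φ ≤ 0} = ker φ + ℝ≥0 • u`, via `x = (x + φ x • u) + (-φ x) • u`.
  convert ((LinearMap.ker φ).map f).isClosed_setOf_add_nonneg_smul (f u) using 1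
  ext y
  constructor
  · rintro ⟨x, hx, rfl⟩
    refine ⟨f (x + φ x • u), ⟨_, by simp [hu], rfl⟩, -φ x, by simpa using hx, ?_⟩
    simp
  · rintro ⟨_, ⟨k, hk, rfl⟩, c, hc, rfl⟩
    refine ⟨k + c • u, ?_, by simp⟩
    simpa [LinearMap.mem_ker.mp hk, hu] using hc

theorem LinearMap.image_setOf_nonpos_subset_closure (f : E →ₗ[ℝ] F) {φ : E →ₗ[ℝ] ℝ}
    (hφ : φ ≠ 0) : f '' {x | φ x ≤ 0} ⊆ closure (f '' {x | φ x < 0}) := by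
  obtain ⟨u, hu⟩ := LinearMap.surjective_of_ne_zero hφ (-1)
  rintro _ ⟨x, hx, rfl⟩
  have hlim : Filter.Tendsto (fun t : ℝ ↦ f (x + t • u)) (𝓝[>] 0) (𝓝 (f x)) := by
    have hcont : Continuous fun t : ℝ ↦ f x + t • f u := by fun_prop
    simpa using (hcont.tendsto 0).mono_left nhdsWithin_le_nhds
  refine mem_closure_of_tendsto hlim ?_
  filter_upwards [self_mem_nhdsWithin] with t (ht : 0 < t)
  refine ⟨x + t • u, ?_, rfl⟩
  simp only [Set.mem_ofPred_eq, map_add, map_smul, hu, smul_eq_mul]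
  linarith [show φ x ≤ 0 from hx]

end

theorem stmt_10_general (M N : ℕ)
    (P : Fin M → ℝ) (C : Matrix (Fin M) (Fin N) ℝ) (hP : P ≠ 0) :
    IsClosed {w : Fin N → ℝ | ∃ q : Fin M → ℝ, w = Matrix.vecMul q C ∧ q ⬝ᵥ P ≤ 0} ∧
    Convex ℝ {w : Fin N → ℝ | ∃ q : Fin M → ℝ, w = Matrix.vecMul q C ∧ q ⬝ᵥ P ≤ 0} ∧
    (∀ (c : ℝ), 0 ≤ c →
      ∀ w ∈ {w : Fin N → ℝ | ∃ q : Fin M → ℝ, w = Matrix.vecMul q C ∧ q ⬝ᵥ P ≤ 0},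
        c • w ∈ {w : Fin N → ℝ | ∃ q : Fin M → ℝ, w = Matrix.vecMul q C ∧ q ⬝ᵥ P ≤ 0}) ∧
    {w : Fin N → ℝ | ∃ q : Fin M → ℝ, w = Matrix.vecMul q C ∧ q ⬝ᵥ P ≤ 0} =
      closure {w : Fin N → ℝ | ∃ q : Fin M → ℝ, w = Matrix.vecMul q C ∧ q ⬝ᵥ P < 0} := by
  set φ := (dotProductBilin ℝ ℝ).flip P
  have hφ : φ ≠ 0 := fun h ↦ hP (dotProduct_self_eq_zero.mp congr($h P))
  have image_eq (r : ℝ → ℝ → Prop) :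
      {w | ∃ q : Fin M → ℝ, w = vecMul q C ∧ r (q ⬝ᵥ P) 0} =
        C.vecMulLinear '' {q | r (φ q) 0} := by
    ext w
    simp [φ, eq_comm, and_comm]
  rw [image_eq (· ≤ ·), image_eq (· < ·)]
  have hclosed := C.vecMulLinear.isClosed_image_setOf_nonpos φ
  refine ⟨hclosed, (convex_halfSpace_le φ.isLinear 0).linear_image _, ?_, ?_⟩
  · rintro c hc _ ⟨q, hq, rfl⟩
    exact ⟨c • q, by simpa using mul_nonpos_of_nonneg_of_nonpos hc hq, map_smul _ c q⟩
  · exact (C.vecMulLinear.image_setOf_nonpos_subset_closure hφ).antisymm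
      (closure_minimal (Set.image_mono fun _ ↦ le_of_lt (α := ℝ)) hclosed)

/-- If `P ≠ 0`, then `𝒞̄ = {Cᵀq : qᵀP ≤ 0}` is a closed convex cone in `ℝ^N`
and equals the topological closure of `𝒞 = {Cᵀq : qᵀP < 0}`. -/
theorem stmt_10 (M N : ℕ) (hM : 1 ≤ M) (hN : 1 ≤ N)
    (P : Fin M → ℝ) (C : Matrix (Fin M) (Fin N) ℝ) (hP : P ≠ 0) :
    IsClosed {w : Fin N → ℝ | ∃ q : Fin M → ℝ, w = Matrix.vecMul q C ∧ q ⬝ᵥ P ≤ 0} ∧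
    Convex ℝ {w : Fin N → ℝ | ∃ q : Fin M → ℝ, w = Matrix.vecMul q C ∧ q ⬝ᵥ P ≤ 0} ∧
    (∀ (c : ℝ), 0 ≤ c →
      ∀ w ∈ {w : Fin N → ℝ | ∃ q : Fin M → ℝ, w = Matrix.vecMul q C ∧ q ⬝ᵥ P ≤ 0},
        c • w ∈ {w : Fin N → ℝ | ∃ q : Fin M → ℝ, w = Matrix.vecMul q C ∧ q ⬝ᵥ P ≤ 0}) ∧
    {w : Fin N → ℝ | ∃ q : Fin M → ℝ, w = Matrix.vecMul q C ∧ q ⬝ᵥ P ≤ 0} =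
      closure {w : Fin N → ℝ | ∃ q : Fin M → ℝ, w = Matrix.vecMul q C ∧ q ⬝ᵥ P < 0} :=
  stmt_10_general M N P C hP
end

section
/- Assume: (i) there is no arbitrage, i.e., no portfolio q ∈ ℝ^M satisfies qᵀP ≤ 0, qᵀC ≥ 0 componentwise, and (qᵀC)_j > 0 for some j; (ii) the linear map q ↦ qᵀC from ℝ^M to ℝ^N is injective (ker(Cᵀ) = {0}); and (iii) the super-replication set 𝒬 := { q ∈ ℝ^M : qᵀC ≥ Z componentwise } is nonempty. Then the linear program min_{q ∈ 𝒬} qᵀP admits at least one minimizer, i.e., there exists q* ∈ 𝒬 with q*ᵀP ≤ qᵀP for all q ∈ 𝒬. -/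
open Matrix BigOperators

private lemma cont_dot {M : ℕ} (w : Fin M → ℝ) :
    Continuous fun q : Fin M → ℝ => q ⬝ᵥ w := by
  simp only [dotProduct]
  exact continuous_finset_sum _ fun i _ => (continuous_apply i).mul continuous_const

/-- Existence of a least-cost super-replicating portfolio under no arbitrage,
injectivity of `q ↦ qᵀC`, and feasibility of super-replication. -/
theorem stmt_14 (M N : ℕ) (hM : 1 ≤ M) (hN : 1 ≤ N)
    (P : Fin M → ℝ) (C : Matrix (Fin M) (Fin N) ℝ) (Z : Fin N → ℝ)
    (hNA : ¬ ∃ q : Fin M → ℝ, q ⬝ᵥ P ≤ 0 ∧ (∀ j, 0 ≤ Matrix.vecMul q C j) ∧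
        ∃ j, 0 < Matrix.vecMul q C j)
    (hinj : Function.Injective fun q : Fin M → ℝ => Matrix.vecMul q C)
    (hfeas : ∃ q : Fin M → ℝ, ∀ j, Z j ≤ Matrix.vecMul q C j) :
    ∃ qs : Fin M → ℝ, (∀ j, Z j ≤ Matrix.vecMul qs C j) ∧
      ∀ q : Fin M → ℝ, (∀ j, Z j ≤ Matrix.vecMul q C j) → qs ⬝ᵥ P ≤ q ⬝ᵥ P := by
  obtain ⟨q0, hq0⟩ := hfeas
  set S : Set (Fin M → ℝ) :=
    {q | (∀ j, Z j ≤ Matrix.vecMul q C j) ∧ q ⬝ᵥ P ≤ q0 ⬝ᵥ P} with hSdef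
  have hvmeq : ∀ (q : Fin M → ℝ) (j : Fin N),
      Matrix.vecMul q C j = q ⬝ᵥ fun i => C i j := fun q j => rfl
  have hvm : ∀ j, Continuous fun q : Fin M → ℝ => Matrix.vecMul q C j := by
    intro j
    simp only [hvmeq]
    exact cont_dot _
  have hSclosed : IsClosed S := by
    have h1 : IsClosed {q : Fin M → ℝ | ∀ j, Z j ≤ Matrix.vecMul q C j} := by
      have h := isClosed_iInter (fun j : Fin N =>
        isClosed_le (continuous_const : Continuous fun _ : Fin M → ℝ => Z j) (hvm j))
      convert h using 1
      ext q; simp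
    exact h1.inter (isClosed_le (cont_dot P) continuous_const)
  have hSbdd : Bornology.IsBounded S := by
    by_contra hb
    rw [isBounded_iff_forall_norm_le] at hb
    push_neg at hb
    choose u huS hun using fun n : ℕ => hb (n : ℝ)
    have hpos : ∀ n, 0 < ‖u n‖ := fun n =>
      lt_of_le_of_lt (Nat.cast_nonneg n) (hun n)
    set v : ℕ → Fin M → ℝ := fun n => ‖u n‖⁻¹ • u n with hvdef
    have hvs : ∀ n, v n ∈ Metric.sphere (0 : Fin M → ℝ) 1 := by
      intro n
      rw [mem_sphere_zero_iff_norm, hvdef]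
      rw [norm_smul, norm_inv, norm_norm]
      exact inv_mul_cancel₀ (ne_of_gt (hpos n))
    obtain ⟨d, hdK, φ, hφ, hlim⟩ :=
      (isCompact_sphere (0 : Fin M → ℝ) 1).tendsto_subseq hvs
    have hφle : ∀ n : ℕ, (n : ℝ) ≤ ‖u (φ n)‖ := fun n =>
      le_trans (by exact_mod_cast hφ.le_apply) (le_of_lt (hun (φ n)))
    have htop : Filter.Tendsto (fun n => ‖u (φ n)‖) Filter.atTop Filter.atTop :=
      Filter.tendsto_atTop_mono hφle tendsto_natCast_atTop_atTop
    have tend0 : Filter.Tendsto (fun n => ‖u (φ n)‖⁻¹) Filter.atTop (nhds 0) :=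
      htop.inv_tendsto_atTop
    -- component limits
    have hdC : ∀ j, 0 ≤ Matrix.vecMul d C j := by
      intro j
      have hle : ∀ n, Z j * ‖u (φ n)‖⁻¹ ≤ Matrix.vecMul (v (φ n)) C j := by
        intro n
        have : Matrix.vecMul (v (φ n)) C j = ‖u (φ n)‖⁻¹ * Matrix.vecMul (u (φ n)) C j := by
          simp [hvdef, hvmeq, smul_dotProduct, smul_eq_mul]
        rw [this, mul_comm (Z j)]
        exact mul_le_mul_of_nonneg_left ((huS (φ n)).1 j) (le_of_lt (inv_pos.mpr (hpos _)))
      have hL : Filter.Tendsto (fun n => Z j * ‖u (φ n)‖⁻¹) Filter.atTop (nhds 0) := by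
        have := tend0.const_mul (Z j)
        simpa using this
      have hR : Filter.Tendsto (fun n => Matrix.vecMul (v (φ n)) C j) Filter.atTop
          (nhds (Matrix.vecMul d C j)) := ((hvm j).tendsto d).comp hlim
      exact le_of_tendsto_of_tendsto' hL hR hle
    have hdP : d ⬝ᵥ P ≤ 0 := by
      have hle : ∀ n, v (φ n) ⬝ᵥ P ≤ ‖u (φ n)‖⁻¹ * (q0 ⬝ᵥ P) := by
        intro n
        have : v (φ n) ⬝ᵥ P = ‖u (φ n)‖⁻¹ * (u (φ n) ⬝ᵥ P) := by
          simp [hvdef, smul_dotProduct, smul_eq_mul]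
        rw [this]
        exact mul_le_mul_of_nonneg_left ((huS (φ n)).2) (le_of_lt (inv_pos.mpr (hpos _)))
      have hL : Filter.Tendsto (fun n => v (φ n) ⬝ᵥ P) Filter.atTop (nhds (d ⬝ᵥ P)) :=
        ((cont_dot P).tendsto d).comp hlim
      have hR : Filter.Tendsto (fun n => ‖u (φ n)‖⁻¹ * (q0 ⬝ᵥ P)) Filter.atTop (nhds 0) := by
        have := tend0.mul_const (q0 ⬝ᵥ P)
        simpa using this
      exact le_of_tendsto_of_tendsto' hL hR hle
    have hzero : ∀ j, Matrix.vecMul d C j = 0 := by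
      intro j
      by_contra hj
      exact hNA ⟨d, hdP, hdC, j, lt_of_le_of_ne (hdC j) (Ne.symm hj)⟩
    have hd0 : d = 0 := by
      apply hinj
      funext j
      simp [hzero j, Matrix.zero_vecMul]
    rw [mem_sphere_zero_iff_norm] at hdK
    rw [hd0] at hdK
    simp at hdK
  have hScompact : IsCompact S := Metric.isCompact_of_isClosed_isBounded hSclosed hSbdd
  have hSne : S.Nonempty := ⟨q0, hq0, le_refl _⟩
  obtain ⟨qs, hqsS, hmin⟩ := hScompact.exists_isMinOn hSne ((cont_dot P).continuousOn)
  refine ⟨qs, hqsS.1, fun q hq => ?_⟩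
  by_cases hc : q ⬝ᵥ P ≤ q0 ⬝ᵥ P
  · exact hmin ⟨hq, hc⟩
  · exact le_trans (hmin ⟨hq0, le_refl _⟩) (le_of_not_ge hc)
end

section
/- Assume there is no arbitrage, the linear map q ↦ qᵀC from ℝ^M to ℝ^N is injective, and q₀ ∈ ℝ^M satisfies q₀ᵀC ≥ Z componentwise. Then the lower level set 𝒬₀ := { q ∈ ℝ^M : qᵀC ≥ Z componentwise and qᵀP ≤ q₀ᵀP } is a nonempty compact convex subset of ℝ^M. -/
open Matrix BigOperators

/-- Under no arbitrage and injectivity of `q ↦ qᵀC`, the lower level set `𝒬₀` of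
super-replicating portfolios with price at most `q₀ᵀ P` is a nonempty compact
convex subset of `ℝ^M`. -/
theorem stmt_16 (M N : ℕ) (hM : 1 ≤ M) (hN : 1 ≤ N)
    (P : Fin M → ℝ) (C : Matrix (Fin M) (Fin N) ℝ) (Z : Fin N → ℝ)
    (hNA : ¬ ∃ q : Fin M → ℝ, q ⬝ᵥ P ≤ 0 ∧ (∀ j, 0 ≤ Matrix.vecMul q C j) ∧
        ∃ j, 0 < Matrix.vecMul q C j)
    (hinj : Function.Injective fun q : Fin M → ℝ => Matrix.vecMul q C)
    (q₀ : Fin M → ℝ) (hq₀ : ∀ j, Z j ≤ Matrix.vecMul q₀ C j) :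
    ({q : Fin M → ℝ | (∀ j, Z j ≤ Matrix.vecMul q C j) ∧ q ⬝ᵥ P ≤ q₀ ⬝ᵥ P}).Nonempty ∧
    IsCompact {q : Fin M → ℝ | (∀ j, Z j ≤ Matrix.vecMul q C j) ∧ q ⬝ᵥ P ≤ q₀ ⬝ᵥ P} ∧
    Convex ℝ {q : Fin M → ℝ | (∀ j, Z j ≤ Matrix.vecMul q C j) ∧ q ⬝ᵥ P ≤ q₀ ⬝ᵥ P} := by
  haveI : Nonempty (Fin N) := ⟨⟨0, hN⟩⟩
  set Q : Set (Fin M → ℝ) :=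
    {q : Fin M → ℝ | (∀ j, Z j ≤ Matrix.vecMul q C j) ∧ q ⬝ᵥ P ≤ q₀ ⬝ᵥ P} with hQ
  have hne : Finset.Nonempty (Finset.univ : Finset (Fin N)) := Finset.univ_nonempty
  -- continuity of basic maps
  have hcont_dot : Continuous fun q : Fin M → ℝ => q ⬝ᵥ P := by
    simp only [dotProduct]
    exact continuous_finset_sum _ fun i _ => (continuous_apply i).mul continuous_const
  have hcont_vm : ∀ j, Continuous fun q : Fin M → ℝ => Matrix.vecMul q C j := by
    intro j
    simp only [Matrix.vecMul, dotProduct]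
    exact continuous_finset_sum _ fun i _ => (continuous_apply i).mul continuous_const
  -- nonempty
  have hmem₀ : q₀ ∈ Q := ⟨hq₀, le_refl _⟩
  refine ⟨⟨q₀, hmem₀⟩, ?_, ?_⟩
  · -- compact: closed and bounded
    have hclosed : IsClosed Q := by
      have h1 : IsClosed {q : Fin M → ℝ | ∀ j, Z j ≤ Matrix.vecMul q C j} := by
        have : {q : Fin M → ℝ | ∀ j, Z j ≤ Matrix.vecMul q C j}
            = ⋂ j, {q : Fin M → ℝ | Z j ≤ Matrix.vecMul q C j} := by
          ext q; simp [Set.mem_iInter]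
        rw [this]
        exact isClosed_iInter fun j => isClosed_le continuous_const (hcont_vm j)
      exact h1.inter (isClosed_le hcont_dot continuous_const)
    -- gauge function
    set g : (Fin M → ℝ) → ℝ :=
      fun d => max (d ⬝ᵥ P) (Finset.univ.sup' hne fun j => -(Matrix.vecMul d C j)) with hg
    have hcontg : Continuous g := by
      apply Continuous.max hcont_dot
      exact Continuous.finset_sup'_apply hne fun j _ => (hcont_vm j).neg
    have hsphere : IsCompact (Metric.sphere (0 : Fin M → ℝ) 1) := isCompact_sphere _ _
    have hsne : (Metric.sphere (0 : Fin M → ℝ) 1).Nonempty := by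
      haveI : Nonempty (Fin M) := ⟨⟨0, hM⟩⟩
      exact NormedSpace.sphere_nonempty.2 zero_le_one
    obtain ⟨d₀, hd₀mem, hd₀min'⟩ :=
      hsphere.exists_isMinOn hsne hcontg.continuousOn
    have hd₀min : ∀ d ∈ Metric.sphere (0 : Fin M → ℝ) 1, g d₀ ≤ g d := fun d hd => hd₀min' hd
    set ε := g d₀ with hε
    have hεpos : 0 < ε := by
      by_contra h
      push_neg at h
      have hP : d₀ ⬝ᵥ P ≤ 0 := le_trans (le_max_left _ _) h
      have hC : ∀ j, 0 ≤ Matrix.vecMul d₀ C j := by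
        intro j
        have : -(Matrix.vecMul d₀ C j) ≤ ε :=
          le_trans (Finset.le_sup' (fun j => -(Matrix.vecMul d₀ C j)) (Finset.mem_univ j))
            (le_max_right _ _)
        linarith [le_trans this h]
      have hd₀ne : d₀ ≠ 0 := by
        intro h0
        have := mem_sphere_zero_iff_norm.mp hd₀mem
        rw [h0, norm_zero] at this; norm_num at this
      have hvne : Matrix.vecMul d₀ C ≠ 0 := by
        intro hv
        apply hd₀ne
        apply hinj
        simp only [hv, Matrix.zero_vecMul]
      obtain ⟨j, hj⟩ := Function.ne_iff.mp hvne
      exact hNA ⟨d₀, hP, hC, j, lt_of_le_of_ne (hC j) (Ne.symm hj)⟩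
    -- bound
    set B := max (q₀ ⬝ᵥ P) (Finset.univ.sup' hne fun j => -(Z j)) with hB
    have hbound : ∀ q ∈ Q, ‖q‖ ≤ max (B / ε) 0 := by
      intro q hq
      rcases eq_or_ne q 0 with rfl | hq0
      · simp
      · have hnorm : 0 < ‖q‖ := norm_pos_iff.mpr hq0
        set d := ‖q‖⁻¹ • q with hd
        have hdmem : d ∈ Metric.sphere (0 : Fin M → ℝ) 1 := by
          simp [hd, norm_smul, abs_of_pos (inv_pos.mpr hnorm), inv_mul_cancel₀ hnorm.ne']
        have hεd : ε ≤ g d := hd₀min d hdmem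
        have key : ε * ‖q‖ ≤ B := by
          rcases le_max_iff.mp hεd with h1 | h2
          · -- ε ≤ d ⬝ᵥ P = ‖q‖⁻¹ * (q ⬝ᵥ P)
            have : d ⬝ᵥ P = ‖q‖⁻¹ * (q ⬝ᵥ P) := by
              simp [hd, smul_dotProduct, smul_eq_mul]
            rw [this] at h1
            have hqP : ε * ‖q‖ ≤ q ⬝ᵥ P := by
              have := mul_le_mul_of_nonneg_right h1 hnorm.le
              rwa [mul_comm (‖q‖⁻¹) _, mul_assoc, inv_mul_cancel₀ hnorm.ne', mul_one] at this
            exact le_trans (le_trans hqP hq.2) (le_max_left _ _)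
          · obtain ⟨j, _, hj⟩ := Finset.exists_mem_eq_sup' hne
              fun j => -(Matrix.vecMul d C j)
            rw [hj] at h2
            have hvd : Matrix.vecMul d C j = ‖q‖⁻¹ * Matrix.vecMul q C j := by
              simp [hd, Matrix.smul_vecMul, smul_eq_mul]
            rw [hvd] at h2
            have : ε * ‖q‖ ≤ -(Matrix.vecMul q C j) := by
              have := mul_le_mul_of_nonneg_right h2 hnorm.le
              rw [neg_mul, mul_comm (‖q‖⁻¹) _, mul_assoc, inv_mul_cancel₀ hnorm.ne',
                mul_one] at this
              linarith
            have hZ : -(Matrix.vecMul q C j) ≤ -(Z j) := neg_le_neg (hq.1 j)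
            exact le_trans (le_trans this hZ)
              (le_trans (Finset.le_sup' (fun j => -(Z j)) (Finset.mem_univ j))
                (le_max_right _ _))
        have : ‖q‖ ≤ B / ε := by
          rw [le_div_iff₀ hεpos]; linarith [key]
        exact le_trans this (le_max_left _ _)
    have hsub : Q ⊆ Metric.closedBall 0 (max (B / ε) 0) := by
      intro q hq
      simpa [Metric.mem_closedBall, dist_zero_right] using hbound q hq
    exact (isCompact_closedBall _ _).of_isClosed_subset hclosed hsub
  · -- convex
    intro x hx y hy a b ha hb hab
    constructor
    · intro j
      have hx1 := hx.1 j
      have hy1 := hy.1 j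
      have : Matrix.vecMul (a • x + b • y) C j
          = a * Matrix.vecMul x C j + b * Matrix.vecMul y C j := by
        simp [Matrix.add_vecMul, Matrix.smul_vecMul, smul_eq_mul]
      rw [this]
      calc Z j = a * Z j + b * Z j := by rw [← add_mul, hab, one_mul]
        _ ≤ a * Matrix.vecMul x C j + b * Matrix.vecMul y C j :=
          add_le_add (mul_le_mul_of_nonneg_left hx1 ha) (mul_le_mul_of_nonneg_left hy1 hb)
    · have : (a • x + b • y) ⬝ᵥ P = a * (x ⬝ᵥ P) + b * (y ⬝ᵥ P) := by
        simp [add_dotProduct, smul_dotProduct, smul_eq_mul]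
      rw [this]
      calc a * (x ⬝ᵥ P) + b * (y ⬝ᵥ P)
          ≤ a * (q₀ ⬝ᵥ P) + b * (q₀ ⬝ᵥ P) :=
            add_le_add (mul_le_mul_of_nonneg_left hx.2 ha) (mul_le_mul_of_nonneg_left hy.2 hb)
        _ = q₀ ⬝ᵥ P := by rw [← add_mul, hab, one_mul]
end
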